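/- arXiv:1209.1496 — 2 statements merged into one kernel-verified Lean document; each statement's English description precedes it below -/
import Mathlib

section
/- Let a ≥ 1 and d ≥ 2 be integers, M be a finite matroid, N be a minor of M, and 𝒳 ⊆ ℛ_a(M) ∩ ℛ_a(N). If ε_M(𝒳) > d^{r(M) - r(N)} · ε_N(𝒳), then there is a subcollection 𝒴 ⊆ 𝒳 such that r_M(𝒴) > a and 𝒴 is d-firm in M. -/
open Set
open scoped Classical

namespace Matroid

variable {α β : Type*}

/-- The rank of a set `X` in a matroid `M`: the maximum size of an independent subset of `X`
(appropriate for finite matroids). -/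
noncomputable def rk (M : Matroid α) (X : Set α) : ℕ :=
  sSup {n | ∃ I, I ⊆ X ∧ M.Indep I ∧ I.ncard = n}

/-- The rank `r(M)` of a matroid `M`. -/
noncomputable def rank (M : Matroid α) : ℕ := M.rk M.E

/-- The deletion `M \ D` of a set `D` from `M`. -/
def delete' (M : Matroid α) (D : Set α) : Matroid α := M ↾ (M.E \ D)

/-- The contraction `M / C` of a set `C` in `M`, defined via duality. -/
def contract' (M : Matroid α) (C : Set α) : Matroid α := (M✶.delete' C)✶

/-- `N` is a minor of `M`, i.e. `N = M / C \ D` for some sets `C` and `D`. -/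
def IsMinor' (N M : Matroid α) : Prop := ∃ C D : Set α, (M.contract' C).delete' D = N

/-- An isomorphism between matroids, possibly on different ground types. -/
def IsIso (M : Matroid α) (N : Matroid β) : Prop :=
  ∃ e : M.E ≃ N.E, ∀ I : Set M.E, M.Indep ((↑) '' I) ↔ N.Indep ((↑) '' (e '' I))

/-- `N` is isomorphic to the uniform matroid `U_{k,n}`: the ground set has `n` elements and
the independent sets are exactly the subsets with at most `k` elements. -/
def IsUnif (N : Matroid α) (k n : ℕ) : Prop :=
  N.E.Finite ∧ N.E.ncard = n ∧ ∀ I ⊆ N.E, (N.Indep I ↔ I.ncard ≤ k)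

/-- `M` has a minor isomorphic to `U_{k,n}`. -/
def HasUnifMinor (M : Matroid α) (k n : ℕ) : Prop :=
  ∃ N : Matroid α, N.IsMinor' M ∧ N.IsUnif k n

/-- `τ_a(M)`: the minimum size of a collection of subsets of `E(M)`, each of rank at most `a`,
whose union is `E(M)`. -/
noncomputable def tau (M : Matroid α) (a : ℕ) : ℕ :=
  sInf {n | ∃ 𝒞 : Finset (Set α),
    𝒞.card = n ∧ (∀ X ∈ 𝒞, X ⊆ M.E ∧ M.rk X ≤ a) ∧ M.E ⊆ ⋃₀ ↑𝒞}

/-- `M` is `d`-thick: every collection of sets, each of rank less than `r(M)`, whose union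
is `E(M)`, has at least `d` members. -/
def Thick (M : Matroid α) (d : ℕ) : Prop :=
  ∀ 𝒞 : Finset (Set α), (∀ X ∈ 𝒞, X ⊆ M.E ∧ M.rk X < M.rank) → M.E ⊆ ⋃₀ ↑𝒞 → d ≤ 𝒞.card

/-- A set `X` is `d`-thick in `M` if the restriction `M|X` is `d`-thick. -/
def ThickIn (M : Matroid α) (d : ℕ) (X : Set α) : Prop := (M ↾ X).Thick d

/-- A collection of sets is simple in `M` if its members are pairwise dissimilar,
i.e. distinct members have distinct closures. -/
def SimpleColl (M : Matroid α) (𝒳 : Finset (Set α)) : Prop :=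
  ∀ X ∈ 𝒳, ∀ Y ∈ 𝒳, M.closure X = M.closure Y → X = Y

/-- `ε_M(𝒳)`: the maximum size of a subcollection of `𝒳` that is simple in `M`. -/
noncomputable def eps (M : Matroid α) (𝒳 : Finset (Set α)) : ℕ :=
  sSup {n | ∃ 𝒴 : Finset (Set α), 𝒴 ⊆ 𝒳 ∧ M.SimpleColl 𝒴 ∧ 𝒴.card = n}

/-- `𝒳` is `d`-firm in `M`: every subcollection `𝒳'` with `|𝒳'| > |𝒳|/d` has the same rank
as `𝒳`. -/
def Firm (M : Matroid α) (d : ℕ) (𝒳 : Finset (Set α)) : Prop :=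
  ∀ 𝒳' ⊆ 𝒳, 𝒳.card < d * 𝒳'.card → M.rk (⋃₀ ↑𝒳') = M.rk (⋃₀ ↑𝒳)

/-- `ℱ` is a cover of the collection `𝒳` in `M`: every member of `𝒳` is contained in a member
of `ℱ`. -/
def CoverOf (M : Matroid α) (ℱ 𝒳 : Finset (Set α)) : Prop :=
  (∀ F ∈ ℱ, F ⊆ M.E) ∧ ∀ X ∈ 𝒳, ∃ F ∈ ℱ, X ⊆ F

/-- `ℱ` is a cover of the matroid `M`: every element of `E(M)` lies in a member of `ℱ`. -/
def CoverOfGround (M : Matroid α) (ℱ : Finset (Set α)) : Prop :=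
  (∀ F ∈ ℱ, F ⊆ M.E) ∧ M.E ⊆ ⋃₀ ↑ℱ

/-- The weight `wt^d_M(ℱ) = Σ_{F ∈ ℱ} d^{r_M(F)}`. -/
noncomputable def wt (M : Matroid α) (d : ℕ) (ℱ : Finset (Set α)) : ℕ :=
  ∑ F ∈ ℱ, d ^ M.rk F

/-- `ℱ` is a `d`-minimal cover of the collection `𝒳` in `M`. -/
def MinimalCoverOf (M : Matroid α) (d : ℕ) (ℱ 𝒳 : Finset (Set α)) : Prop :=
  M.CoverOf ℱ 𝒳 ∧ ∀ ℱ' : Finset (Set α), M.CoverOf ℱ' 𝒳 → M.wt d ℱ ≤ M.wt d ℱ'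

/-- `ℱ` is a `d`-minimal cover of the matroid `M`. -/
def MinimalCoverOfGround (M : Matroid α) (d : ℕ) (ℱ : Finset (Set α)) : Prop :=
  M.CoverOfGround ℱ ∧ ∀ ℱ' : Finset (Set α), M.CoverOfGround ℱ' → M.wt d ℱ ≤ M.wt d ℱ'

/-- `τ^d(M)`: the minimum weight of a cover of `M`. -/
noncomputable def tauW (M : Matroid α) (d : ℕ) : ℕ :=
  sInf {n | ∃ ℱ : Finset (Set α), M.CoverOfGround ℱ ∧ M.wt d ℱ = n}

/-- `𝒳` is `d`-scattered in `M`: every member of `𝒳` is `d`-thick in `M`, and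
`{cl_M(X) : X ∈ 𝒳}` is a `d`-minimal cover of `𝒳` in `M`. -/
def Scattered (M : Matroid α) (d : ℕ) (𝒳 : Finset (Set α)) : Prop :=
  (∀ X ∈ 𝒳, M.ThickIn d X) ∧ M.MinimalCoverOf d (𝒳.image M.closure) 𝒳

/-- `(M, 𝒮; L)` is an `(a, q, h, d)`-pyramid, where `h = L.length` and `L` lists the
elements `e_1, …, e_h`. -/
def IsPyramid (M : Matroid α) (𝒮 : Finset (Set α)) (L : List α) (a q d : ℕ) : Prop :=
  L.Nodup ∧ M.Indep {x | x ∈ L} ∧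
  𝒮.Nonempty ∧
  (∀ S ∈ 𝒮, S ⊆ M.E ∧ M.rk S = a) ∧
  (∀ S ∈ 𝒮, M.rk (S ∪ {x | x ∈ L}) = M.rk S + M.rk {x | x ∈ L}) ∧
  (∀ i < L.length, ∀ S ∈ 𝒮, ∃ f : Fin q → Set α,
    (∀ j, f j ∈ 𝒮) ∧
    (∀ j k, j ≠ k →
      (M.contract' {x | x ∈ L.take i}).closure (f j) ≠
        (M.contract' {x | x ∈ L.take i}).closure (f k)) ∧
    (∀ j, (M.contract' {x | x ∈ L.take (i+1)}).closure (f j) =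
      (M.contract' {x | x ∈ L.take (i+1)}).closure S)) ∧
  (∀ S ∈ 𝒮, M.ThickIn d S)

/-- `M` is representable over the field `F`. -/
def RepresentableOver (M : Matroid α) (F : Type*) [Field F] : Prop :=
  ∃ (n : ℕ) (φ : α → (Fin n → F)),
    ∀ I ⊆ M.E, (M.Indep I ↔ LinearIndependent F (fun x : I => φ x))

end Matroid

/-!
Take a maximum subcollection `𝒴₀ ⊆ 𝒳` that is simple in `M`. Its members fall into at most
`ε_N(𝒳)` similarity classes of `N`, so by pigeonhole one class `𝒵` has more than `d ^ k`
members, `k = r(M) - r(N)`. The members of `𝒵` span one rank-`a` flat of `N`, and passing from a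
minor back to `M` raises ranks by at most `k`, so `r_M(𝒵) ≤ a + k`. Finally, a simple collection
with more than `d ^ k` members and rank at most `a + k` contains a firm subcollection of rank
greater than `a`: if it is not firm itself, a subcollection of more than a `1/d` fraction of it
has smaller rank, and we descend on `k`.
-/

namespace Matroid

section

variable {α : Type*} {M N : Matroid α} {C X Y Z : Set α}

lemma cast_rk [M.RankFinite] (X : Set α) : (M.rk X : ℕ∞) = M.eRk X := by
  obtain ⟨I, hI⟩ := M.exists_isBasis' X
  have hmax : IsGreatest {n | ∃ J, J ⊆ X ∧ M.Indep J ∧ J.ncard = n} I.ncard := by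
    refine ⟨⟨I, hI.subset, hI.indep, rfl⟩, ?_⟩
    rintro _ ⟨J, hJX, hJ, rfl⟩
    have hJI : J.encard ≤ I.encard := hI.encard_eq_eRk ▸ hJ.encard_le_eRk_of_subset hJX
    rwa [← hJ.finite.cast_ncard_eq, ← hI.indep.finite.cast_ncard_eq, Nat.cast_le] at hJI
  rw [rk, hmax.csSup_eq, hI.indep.finite.cast_ncard_eq, hI.encard_eq_eRk]

lemma cast_rank [M.RankFinite] : (M.rank : ℕ∞) = M.eRank := by
  rw [rank, cast_rk, eRk_ground]

lemma rk_mono [M.RankFinite] (hXY : X ⊆ Y) : M.rk X ≤ M.rk Y := by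
  exact_mod_cast (cast_rk X).trans_le ((M.eRk_mono hXY).trans_eq (cast_rk Y).symm)

lemma rk_closure_eq [M.RankFinite] (X : Set α) : M.rk (M.closure X) = M.rk X := by
  exact_mod_cast (cast_rk _).trans ((M.eRk_closure_eq X).trans (cast_rk X).symm)

lemma closure_eq_closure_of_subset_of_rk_le [M.RankFinite] (hXY : X ⊆ Y)
    (h : M.rk Y ≤ M.rk X) : M.closure X = M.closure Y :=
  (M.isRkFinite_set X).closure_eq_closure_of_subset_of_eRk_ge_eRk hXY
    (by rw [← cast_rk, ← cast_rk]; exact_mod_cast h)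

lemma eRk_contract_add_eRk (M : Matroid α) (C X : Set α) :
    (M ／ C).eRk X + M.eRk C = M.eRk (X ∪ C) := by
  obtain ⟨J, hJ⟩ := M.exists_isBasis' C
  obtain ⟨K, hK, hJK⟩ :=
    hJ.indep.subset_isBasis'_of_subset (hJ.subset.trans subset_union_right : J ⊆ X ∪ C)
  have hKC : (M ／ C).IsBasis' (K \ C) ((X ∪ C) \ C) :=
    hK.contract_isBasis' hJ (hK.indep.subset (union_subset sdiff_subset hJK))
  have hKJ : (K ∩ C).encard = J.encard :=
    le_antisymm (hJ.encard_eq_eRk ▸ (hK.indep.inter_right C).encard_le_eRk_of_subset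
      inter_subset_right) (encard_le_encard (subset_inter hJK hJ.subset))
  have hX : (M ／ C).eRk X = (M ／ C).eRk ((X ∪ C) \ C) := by
    rw [← eRk_inter_ground, ← eRk_inter_ground (X := (X ∪ C) \ C), contract_ground]
    congr 1
    tauto_set
  rw [hX, ← hKC.encard_eq_eRk, ← hJ.encard_eq_eRk, ← hKJ, encard_sdiff_add_encard_inter,
    hK.encard_eq_eRk]

lemma eRank_contract_add_eRk (M : Matroid α) (C : Set α) :
    (M ／ C).eRank + M.eRk C = M.eRank := by
  rw [← eRk_eq_eRank (contract_ground_subset_ground M C), eRk_contract_add_eRk,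
    eRk_ground_union]

lemma IsMinor.eRk_add_eRank_le (hNM : N ≤m M) (hZ : Z ⊆ N.E) :
    M.eRk Z + N.eRank ≤ N.eRk Z + M.eRank := by
  obtain ⟨C, D, rfl⟩ := hNM
  have hZ' : (M ／ C ＼ D).eRk Z = (M ／ C).eRk Z := restrict_eRk_eq _ hZ
  have hrank : (M ／ C ＼ D).eRank ≤ (M ／ C).eRank := eRk_le_eRank _ _
  calc M.eRk Z + (M ／ C ＼ D).eRank
      ≤ ((M ／ C).eRk Z + M.eRk C) + (M ／ C).eRank :=
        add_le_add ((M.eRk_mono subset_union_left).trans_eq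
          (eRk_contract_add_eRk M C Z).symm) hrank
    _ = (M ／ C).eRk Z + ((M ／ C).eRank + M.eRk C) := by ring
    _ = (M ／ C ＼ D).eRk Z + M.eRank := by rw [eRank_contract_add_eRk, hZ']

lemma IsMinor.rankFinite [M.RankFinite] (hNM : N ≤m M) : N.RankFinite := by
  obtain ⟨C, D, rfl⟩ := hNM
  infer_instance

lemma IsMinor.rk_add_rank_le [M.RankFinite] (hNM : N ≤m M) (hZ : Z ⊆ N.E) :
    M.rk Z + N.rank ≤ N.rk Z + M.rank := by
  have := hNM.rankFinite
  rw [← Nat.cast_le (α := ℕ∞)]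
  push_cast
  rw [cast_rk, cast_rk, cast_rank, cast_rank]
  exact hNM.eRk_add_eRank_le hZ

lemma IsMinor.rk_add_rank_le_of_subset_closure [M.RankFinite] (hNM : N ≤m M)
    (hXY : X ⊆ N.closure Y) : M.rk X + N.rank ≤ N.rk Y + M.rank := by
  have := hNM.rankFinite
  have hY : N.rk X ≤ N.rk Y := (rk_mono hXY).trans_eq (rk_closure_eq Y)
  have := hNM.rk_add_rank_le (hXY.trans (N.closure_subset_ground Y))
  omega

lemma IsMinor'.isMinor (h : N.IsMinor' M) : N ≤m M := by
  obtain ⟨C, D, rfl⟩ := h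
  exact contract_delete_isMinor M C D

section Collections

variable {𝒳 𝒴 𝒵 : Finset (Set α)}

lemma SimpleColl.subset (h : M.SimpleColl 𝒳) (h𝒴 : 𝒴 ⊆ 𝒳) : M.SimpleColl 𝒴 :=
  fun X hX Y hY => h X (h𝒴 hX) Y (h𝒴 hY)

lemma eps_bddAbove (M : Matroid α) (𝒳 : Finset (Set α)) :
    BddAbove {n | ∃ 𝒴 : Finset (Set α), 𝒴 ⊆ 𝒳 ∧ M.SimpleColl 𝒴 ∧ 𝒴.card = n} :=
  ⟨𝒳.card, by rintro _ ⟨𝒴, h𝒴, -, rfl⟩; exact Finset.card_le_card h𝒴⟩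

lemma SimpleColl.card_le_eps (h : M.SimpleColl 𝒴) (h𝒴 : 𝒴 ⊆ 𝒳) : 𝒴.card ≤ M.eps 𝒳 :=
  le_csSup (M.eps_bddAbove 𝒳) ⟨𝒴, h𝒴, h, rfl⟩

lemma exists_simpleColl_card_eq_eps (M : Matroid α) (𝒳 : Finset (Set α)) :
    ∃ 𝒴 ⊆ 𝒳, M.SimpleColl 𝒴 ∧ 𝒴.card = M.eps 𝒳 :=
  Nat.sSup_mem (s := {n | ∃ 𝒴 : Finset (Set α), 𝒴 ⊆ 𝒳 ∧ M.SimpleColl 𝒴 ∧ 𝒴.card = n})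
    ⟨0, ∅, Finset.empty_subset _, by simp [SimpleColl], rfl⟩ (M.eps_bddAbove 𝒳)

lemma card_image_closure_le_eps (h𝒴 : 𝒴 ⊆ 𝒳) : (𝒴.image M.closure).card ≤ M.eps 𝒳 := by
  obtain ⟨𝒵, h𝒵𝒴, hinj, himage⟩ := Finset.exists_subset_injOn_image_eq_of_surjOn
    (𝒴 : Set (Set α)) (𝒴.image M.closure) (by rw [Finset.coe_image]; exact surjOn_image _ _)
  have h𝒵 : M.SimpleColl 𝒵 := fun X hX Y hY hXY => hinj hX hY hXY
  rw [← himage, Finset.card_image_of_injOn hinj]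
  exact h𝒵.card_le_eps ((Finset.coe_subset.1 h𝒵𝒴).trans h𝒴)

variable [M.RankFinite] {a d : ℕ}

lemma SimpleColl.lt_rk_sUnion (hs : M.SimpleColl 𝒵) (ha : ∀ X ∈ 𝒵, M.rk X = a)
    (hcard : 1 < 𝒵.card) : a < M.rk (⋃₀ ↑𝒵) := by
  obtain ⟨X, hX, Y, hY, hXY⟩ := Finset.one_lt_card.1 hcard
  have hXYsub : X ∪ Y ⊆ ⋃₀ ↑𝒵 := union_subset (subset_sUnion_of_mem hX) (subset_sUnion_of_mem hY)
  refine lt_of_lt_of_le ?_ (rk_mono hXYsub)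
  by_contra! hle
  exact hXY <| hs X hX Y hY <|
    (closure_eq_closure_of_subset_of_rk_le subset_union_left (ha X hX ▸ hle)).trans
      (closure_eq_closure_of_subset_of_rk_le subset_union_right (ha Y hY ▸ hle)).symm

lemma SimpleColl.exists_firm (hd : d ≠ 0) (k : ℕ) (hs : M.SimpleColl 𝒵)
    (ha : ∀ X ∈ 𝒵, M.rk X = a) (hrk : M.rk (⋃₀ ↑𝒵) ≤ a + k) (hcard : d ^ k < 𝒵.card) :
    ∃ 𝒴 ⊆ 𝒵, a < M.rk (⋃₀ ↑𝒴) ∧ M.Firm d 𝒴 := by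
  induction k generalizing 𝒵 with
  | zero =>
    have := hs.lt_rk_sUnion ha (by simpa using hcard)
    omega
  | succ k ih =>
    by_cases hfirm : M.Firm d 𝒵
    · exact ⟨𝒵, subset_rfl, hs.lt_rk_sUnion ha
        ((Nat.one_le_pow _ _ (Nat.pos_of_ne_zero hd)).trans_lt hcard), hfirm⟩
    obtain ⟨𝒵', h𝒵', hcard', hne⟩ : ∃ 𝒵' ⊆ 𝒵, 𝒵.card < d * 𝒵'.card ∧
        M.rk (⋃₀ ↑𝒵') ≠ M.rk (⋃₀ ↑𝒵) := by
      simpa [Firm] using hfirm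
    have hlt : M.rk (⋃₀ ↑𝒵') < M.rk (⋃₀ ↑𝒵) :=
      (rk_mono (sUnion_mono (Finset.coe_subset.2 h𝒵'))).lt_of_ne hne
    have hcard'' : d ^ k < 𝒵'.card :=
      Nat.lt_of_mul_lt_mul_left ((pow_succ' d k ▸ hcard).trans hcard')
    obtain ⟨𝒴, h𝒴, h⟩ := ih (hs.subset h𝒵') (fun X hX => ha X (h𝒵' hX)) (by omega) hcard''
    exact ⟨𝒴, h𝒴.trans h𝒵', h⟩

end Collections

end

theorem statement8_general {α : Type*} (a d : ℕ) (hd : 2 ≤ d)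
    (M N : Matroid α) (hM : M.Finite) (hN : N.IsMinor' M) (𝒳 : Finset (Set α))
    (h𝒳M : ∀ X ∈ 𝒳, X ⊆ M.E ∧ M.rk X = a)
    (h𝒳N : ∀ X ∈ 𝒳, X ⊆ N.E ∧ N.rk X = a)
    (heps : d ^ (M.rank - N.rank) * N.eps 𝒳 < M.eps 𝒳) :
    ∃ 𝒴 ⊆ 𝒳, a < M.rk (⋃₀ ↑𝒴) ∧ M.Firm d 𝒴 := by
  have hNM : N ≤m M := hN.isMinor
  have := hNM.rankFinite
  obtain ⟨𝒴₀, h𝒴₀, hs, hcard⟩ := M.exists_simpleColl_card_eq_eps 𝒳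
  have hlt : (𝒴₀.image N.closure).card * d ^ (M.rank - N.rank) < 𝒴₀.card :=
    calc _ ≤ N.eps 𝒳 * d ^ (M.rank - N.rank) :=
          Nat.mul_le_mul_right _ (card_image_closure_le_eps h𝒴₀)
      _ < 𝒴₀.card := by rwa [mul_comm, hcard]
  obtain ⟨F, -, hF⟩ := Finset.exists_lt_card_fiber_of_mul_lt_card_of_maps_to
    (fun X hX => Finset.mem_image_of_mem N.closure hX) hlt
  set 𝒵 := 𝒴₀.filter (fun X => N.closure X = F)
  have h𝒵 : ∀ X ∈ 𝒵, X ∈ 𝒳 ∧ N.closure X = F :=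
    fun X hX => ⟨h𝒴₀ (Finset.mem_filter.1 hX).1, (Finset.mem_filter.1 hX).2⟩
  obtain ⟨X₀, hX₀⟩ : 𝒵.Nonempty := Finset.card_pos.1 (by omega)
  have hsub : ⋃₀ ↑𝒵 ⊆ N.closure X₀ := by
    rintro x ⟨X, hX, hx⟩
    rw [(h𝒵 X₀ hX₀).2, ← (h𝒵 X hX).2]
    exact N.subset_closure X (h𝒳N X (h𝒵 X hX).1).1 hx
  have hrk : M.rk (⋃₀ ↑𝒵) ≤ a + (M.rank - N.rank) := by
    have := hNM.rk_add_rank_le_of_subset_closure hsub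
    rw [(h𝒳N X₀ (h𝒵 X₀ hX₀).1).2] at this
    omega
  obtain ⟨𝒴, h𝒴, h⟩ := (hs.subset (Finset.filter_subset _ _)).exists_firm (by omega)
    (M.rank - N.rank) (fun X hX => (h𝒳M X (h𝒵 X hX).1).2) hrk hF
  exact ⟨𝒴, h𝒴.trans ((Finset.filter_subset _ _).trans h𝒴₀), h⟩

/-- If `a ≥ 1`, `d ≥ 2`, `N` is a minor of the finite matroid `M`, and
`𝒳 ⊆ ℛ_a(M) ∩ ℛ_a(N)` satisfies `ε_M(𝒳) > d^{r(M)-r(N)} · ε_N(𝒳)`, then some `𝒴 ⊆ 𝒳`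
satisfies `r_M(𝒴) > a` and is `d`-firm in `M`. -/
theorem statement8 {α : Type*} (a d : ℕ) (ha : 1 ≤ a) (hd : 2 ≤ d)
    (M N : Matroid α) (hM : M.Finite) (hN : N.IsMinor' M) (𝒳 : Finset (Set α))
    (h𝒳M : ∀ X ∈ 𝒳, X ⊆ M.E ∧ M.rk X = a)
    (h𝒳N : ∀ X ∈ 𝒳, X ⊆ N.E ∧ N.rk X = a)
    (heps : d ^ (M.rank - N.rank) * N.eps 𝒳 < M.eps 𝒳) :
    ∃ 𝒴 ⊆ 𝒳, a < M.rk (⋃₀ ↑𝒴) ∧ M.Firm d 𝒴 :=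
  statement8_general a d hd M N hM hN 𝒳 h𝒳M h𝒳N heps

end Matroid
end

section
/- Let a, b, d be integers with 1 ≤ a < b and d ≥ C(b, a), and let M be a finite matroid with no minor isomorphic to U_{a+1,b}. Then no d-minimal cover of M contains a set of rank greater than a, and τ_a(M) ≤ τ^d(M) ≤ d^a · τ_a(M). -/
open Set
open scoped Classical

/-!
Suppose a set `F` of rank `r > a` lies in a `d`-minimal cover. Contracting an independent
`J ⊆ F` with `|J| = r - a - 1` turns `M ↾ F` into a matroid `N` of rank `a + 1`. In `N` take a
maximal set `S` all of whose `(a + 1)`-subsets are independent: `N ↾ S` would be a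
`U_{a+1,b}`-minor if `|S| ≥ b`, so `|S| < b`, and by maximality every element of `N` lies in
the closure of an `a`-subset of `S`. Adding `J` back to these at most `C(b - 1, a)` closures
covers `F` by sets of rank `< r`, of total weight at most `C(b - 1, a) d^(r-1) < d^r`, so
replacing `F` by them would make the cover lighter. Once minimal covers only use sets of rank
at most `a`, both inequalities follow by comparing `d^(r(F))` with `1` and with `d^a`.
-/

namespace Nat

lemma choose_sub_one_lt_choose {a b : ℕ} (ha : 1 ≤ a) (hab : a ≤ b) :
    (b - 1).choose a < b.choose a := by
  obtain ⟨b, rfl⟩ : ∃ c, b = c + 1 := ⟨b - 1, by omega⟩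
  obtain ⟨a, rfl⟩ : ∃ c, a = c + 1 := ⟨a - 1, by omega⟩
  have := Nat.choose_pos (show a ≤ b by omega)
  rw [Nat.choose_succ_succ', add_tsub_cancel_right]
  omega

end Nat

namespace Matroid

section

variable {α : Type*} {M N : Matroid α} {I J X R S T F : Set α} {a b d k n r : ℕ}
  {ℱ 𝒢 : Finset (Set α)}

section Rank

lemma rk_restrict_of_subset (hXR : X ⊆ R) : (M ↾ R).rk X = M.rk X := by
  unfold rk
  congr 1
  ext n
  constructor <;> rintro ⟨I, hIX, hI, rfl⟩
  · exact ⟨I, hIX, hI.of_restrict, rfl⟩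
  · exact ⟨I, hIX, hI.indep_restrict_of_subset (hIX.trans hXR), rfl⟩

variable [M.RankFinite]

lemma IsBasis'.rk_eq_ncard (hI : M.IsBasis' I X) : M.rk X = I.ncard := by
  refine IsGreatest.csSup_eq ⟨⟨I, hI.subset, hI.indep, rfl⟩, ?_⟩
  rintro _ ⟨K, hKX, hK, rfl⟩
  rw [Set.ncard_def, Set.ncard_def]
  refine ENat.toNat_le_toNat ?_ (hI.indep.finite.encard_lt_top.ne)
  rw [hI.encard_eq_eRk]
  exact hK.encard_le_eRk_of_subset hKX

lemma Indep.ncard_le_rk (hI : M.Indep I) (hIX : I ⊆ X) : I.ncard ≤ M.rk X := by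
  obtain ⟨K, hK, hIK⟩ := hI.subset_isBasis'_of_subset hIX
  rw [hK.rk_eq_ncard]
  exact Set.ncard_le_ncard hIK hK.indep.finite

lemma rk_le_ncard (hX : X.Finite) : M.rk X ≤ X.ncard := by
  obtain ⟨I, hI⟩ := M.exists_isBasis' X
  rw [hI.rk_eq_ncard]
  exact Set.ncard_le_ncard hI.subset hX

lemma rk_closure (X : Set α) : M.rk (M.closure X) = M.rk X := by
  obtain ⟨I, hI⟩ := M.exists_isBasis' X
  rw [hI.rk_eq_ncard, hI.isBasis_closure_right.isBasis'.rk_eq_ncard]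

lemma Indep.rk_eq_rk_contract_add (hJ : M.Indep J) (hJX : J ⊆ X) :
    M.rk X = (M ／ J).rk (X \ J) + J.ncard := by
  obtain ⟨K, hK, hJK⟩ := hJ.subset_isBasis'_of_subset hJX
  rw [hK.rk_eq_ncard, (hK.contract_isBasis'_sdiff_sdiff_of_subset hJK).rk_eq_ncard,
    Set.ncard_sdiff_add_ncard_of_subset hJK hK.indep.finite]

end Rank

lemma isMinor'_iff : N.IsMinor' M ↔ N ≤m M :=
  ⟨fun ⟨C, D, h⟩ => ⟨C, D, h.symm⟩, fun ⟨C, D, h⟩ => ⟨C, D, h.symm⟩⟩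

lemma restrict_isMinor (hR : R ⊆ M.E) : M ↾ R ≤m M :=
  ⟨∅, M.E \ R, by rw [contract_empty, delete_compl hR]⟩

lemma contract_isMinor (M : Matroid α) (C : Set α) : M ／ C ≤m M := by
  simpa using M.contract_delete_isMinor C ∅

lemma HasUnifMinor.of_isMinor (h : N.HasUnifMinor k n) (hNM : N ≤m M) :
    M.HasUnifMinor k n := by
  obtain ⟨N', hN', hU⟩ := h
  exact ⟨N', isMinor'_iff.2 ((isMinor'_iff.1 hN').trans hNM), hU⟩

def IndepUpTo (M : Matroid α) (k : ℕ) (S : Set α) : Prop :=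
  S ⊆ M.E ∧ ∀ I ⊆ S, I.ncard ≤ k → M.Indep I

lemma IndepUpTo.mono (hS : M.IndepUpTo k S) (hTS : T ⊆ S) : M.IndepUpTo k T :=
  ⟨hTS.trans hS.1, fun I hIT => hS.2 I (hIT.trans hTS)⟩

lemma hasUnifMinor_of_indepUpTo [M.RankFinite] (hr : M.rank ≤ k) (hS : M.IndepUpTo k S)
    (hSfin : S.Finite) : M.HasUnifMinor k S.ncard := by
  refine ⟨M ↾ S, isMinor'_iff.2 (restrict_isMinor hS.1), hSfin, rfl, fun I hIS => ?_⟩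
  rw [restrict_indep_iff]
  exact ⟨fun hI => (hI.1.ncard_le_rk hI.1.subset_ground).trans hr,
    fun hI => ⟨hS.2 I hIS hI, hIS⟩⟩

lemma exists_subset_mem_closure_of_maximal_indepUpTo (hk : 1 ≤ k)
    (hS : Maximal (M.IndepUpTo (k + 1)) S) {x : α} (hx : x ∈ M.E) :
    ∃ A ⊆ S, A.ncard ≤ k ∧ x ∈ M.closure A := by
  by_cases hxS : x ∈ S
  · exact ⟨{x}, singleton_subset_iff.2 hxS, by simpa using hk, M.mem_closure_self x hx⟩
  obtain ⟨I, hIS, hIcard, hIdep⟩ : ∃ I ⊆ insert x S, I.ncard ≤ k + 1 ∧ ¬ M.Indep I := by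
    by_contra! h
    exact hxS (hS.mem_of_prop_insert ⟨insert_subset hx hS.prop.1, h⟩)
  have hxI : x ∈ I := by
    by_contra hxI
    exact hIdep (hS.prop.2 I ((subset_insert_iff_of_notMem hxI).1 hIS) hIcard)
  have hAS : I \ {x} ⊆ S := by rwa [sdiff_subset_iff, ← insert_eq]
  have hAcard : (I \ {x}).ncard = I.ncard - 1 := Set.ncard_sdiff_singleton_of_mem hxI
  refine ⟨I \ {x}, hAS, by omega, ?_⟩
  rw [(hS.prop.2 _ hAS (by omega)).mem_closure_iff', insert_sdiff_singleton, insert_eq_of_mem hxI]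
  exact ⟨hx, fun hI => absurd hI hIdep⟩

lemma exists_maximal_indepUpTo (M : Matroid α) [M.Finite] (k : ℕ) :
    ∃ S, Maximal (M.IndepUpTo k) S :=
  Set.Finite.exists_maximal (M.ground_finite.finite_subsets.subset fun _ hT => hT.1)
    ⟨∅, empty_subset _, fun I hI _ => by rw [subset_empty_iff.1 hI]; exact M.empty_indep⟩

lemma exists_cover_of_forall_mem_closure [M.RankFinite] (hS : S.Finite) (hSn : S.ncard ≤ n)
    (han : a ≤ n) (h : ∀ x ∈ M.E, ∃ A ⊆ S, A.ncard ≤ a ∧ x ∈ M.closure A) :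
    ∃ 𝒢 : Finset (Set α), M.CoverOfGround 𝒢 ∧ 𝒢.card ≤ n.choose a ∧ ∀ G ∈ 𝒢, M.rk G ≤ a := by
  set m := min a S.ncard
  refine ⟨(hS.toFinset.powersetCard m).image fun A : Finset α => M.closure A, ⟨?_, ?_⟩, ?_, ?_⟩
  · simp only [Finset.mem_image]
    rintro _ ⟨A, -, rfl⟩
    exact M.closure_subset_ground _
  · intro x hx
    obtain ⟨A, hAS, hAa, hxA⟩ := h x hx
    obtain ⟨Z, hAZ, hZS, hZm⟩ :=
      Set.exists_subsuperset_card_eq hAS (le_min hAa (Set.ncard_le_ncard hAS hS))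
        (min_le_right a _)
    have hZfin : Z.Finite := hS.subset hZS
    refine ⟨M.closure Z, Finset.mem_image.2 ⟨hZfin.toFinset, ?_, by rw [hZfin.coe_toFinset]⟩,
      M.closure_subset_closure hAZ hxA⟩
    rw [Finset.mem_powersetCard, ← Set.ncard_eq_toFinset_card Z hZfin]
    exact ⟨Set.Finite.toFinset_subset_toFinset.2 hZS, hZm⟩
  · refine Finset.card_image_le.trans ?_
    rw [Finset.card_powersetCard, ← Set.ncard_eq_toFinset_card S hS]
    rcases le_total a S.ncard with haS | hSa
    · rw [show m = a from min_eq_left haS]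
      exact Nat.choose_le_choose a hSn
    · rw [show m = S.ncard from min_eq_right hSa, Nat.choose_self]
      exact Nat.choose_pos han
  · simp only [Finset.mem_image, Finset.mem_powersetCard]
    rintro _ ⟨A, ⟨-, hAm⟩, rfl⟩
    rw [rk_closure]
    calc M.rk ↑A ≤ (↑A : Set α).ncard := rk_le_ncard A.finite_toSet
      _ = m := by rw [Set.ncard_coe_finset, hAm]
      _ ≤ a := min_le_left _ _

lemma exists_cover_of_rank_eq [M.Finite] (ha : 1 ≤ a) (hab : a < b) (hr : M.rank = a + 1)
    (hU : ¬ M.HasUnifMinor (a + 1) b) :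
    ∃ 𝒢 : Finset (Set α), M.CoverOfGround 𝒢 ∧ 𝒢.card ≤ (b - 1).choose a ∧
      ∀ G ∈ 𝒢, M.rk G ≤ a := by
  obtain ⟨S, hS⟩ := M.exists_maximal_indepUpTo (a + 1)
  have hSfin : S.Finite := M.ground_finite.subset hS.prop.1
  have hSb : S.ncard ≤ b - 1 := by
    by_contra! hbS
    obtain ⟨T, hTS, hTb⟩ := Set.exists_subset_card_eq (show b ≤ S.ncard by omega)
    exact hU (hTb ▸ hasUnifMinor_of_indepUpTo hr.le (hS.prop.mono hTS) (hSfin.subset hTS))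
  exact exists_cover_of_forall_mem_closure hSfin hSb (by omega)
    fun x hx => exists_subset_mem_closure_of_maximal_indepUpTo ha hS hx

lemma exists_cover_rk_lt_rank [M.Finite] (ha : 1 ≤ a) (hab : a < b) (hr : a + 1 ≤ M.rank)
    (hU : ¬ M.HasUnifMinor (a + 1) b) :
    ∃ 𝒢 : Finset (Set α), M.CoverOfGround 𝒢 ∧ 𝒢.card ≤ (b - 1).choose a ∧
      ∀ G ∈ 𝒢, M.rk G < M.rank := by
  obtain ⟨B, hB⟩ := M.exists_isBase
  have hBcard : M.rank = B.ncard := hB.isBasis_ground.isBasis'.rk_eq_ncard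
  obtain ⟨J, hJB, hJcard⟩ :=
    Set.exists_subset_card_eq (show M.rank - (a + 1) ≤ B.ncard by omega)
  have hJ : M.Indep J := hB.indep.subset hJB
  have hrkJ : ∀ X ⊆ (M ／ J).E, M.rk (X ∪ J) = (M ／ J).rk X + J.ncard := fun X hX => by
    rw [hJ.rk_eq_rk_contract_add subset_union_right, union_sdiff_right,
      (subset_sdiff.1 hX).2.sdiff_eq_left]
  have hNr : (M ／ J).rank = a + 1 := by
    have h := hrkJ _ subset_rfl
    rw [contract_ground, sdiff_union_of_subset hJ.subset_ground] at h
    rw [rank] at hJcard hr ⊢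
    rw [contract_ground]
    omega
  obtain ⟨𝒢, ⟨h𝒢E, h𝒢cov⟩, hcard, hrk⟩ :=
    exists_cover_of_rank_eq ha hab hNr fun h => hU (h.of_isMinor (M.contract_isMinor J))
  have h𝒢ne : 𝒢.Nonempty := by
    obtain ⟨y, hy⟩ : (M ／ J).E.Nonempty := by
      by_contra hempty
      have h : (M ／ J).rank ≤ (M ／ J).E.ncard := rk_le_ncard (M ／ J).ground_finite
      rw [not_nonempty_iff_eq_empty.1 hempty, ncard_empty] at h
      omega
    obtain ⟨G, hG, -⟩ := mem_sUnion.1 (h𝒢cov hy)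
    exact ⟨G, hG⟩
  refine ⟨𝒢.image (· ∪ J), ⟨?_, ?_⟩, Finset.card_image_le.trans hcard, ?_⟩
  · simp only [Finset.mem_image]
    rintro _ ⟨G, hG, rfl⟩
    exact union_subset ((h𝒢E G hG).trans (M.contract_ground_subset_ground J)) hJ.subset_ground
  · intro x hx
    by_cases hxJ : x ∈ J
    · obtain ⟨G, hG⟩ := h𝒢ne
      exact mem_sUnion.2 ⟨G ∪ J, Finset.mem_image_of_mem _ hG, Or.inr hxJ⟩
    · obtain ⟨G, hG, hxG⟩ := mem_sUnion.1 (h𝒢cov ⟨hx, hxJ⟩)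
      exact mem_sUnion.2 ⟨G ∪ J, Finset.mem_image_of_mem _ hG, Or.inl hxG⟩
  · simp only [Finset.mem_image]
    rintro _ ⟨G, hG, rfl⟩
    have := hrk G hG
    rw [hrkJ G (h𝒢E G hG)]
    omega

lemma wt_le_card_mul_pow (hd : 1 ≤ d) (h : ∀ F ∈ ℱ, M.rk F ≤ r) :
    M.wt d ℱ ≤ ℱ.card * d ^ r :=
  (Finset.sum_le_card_nsmul _ _ _ fun F hF => Nat.pow_le_pow_right hd (h F hF)).trans_eq
    (smul_eq_mul _ _)

lemma card_le_wt (hd : 1 ≤ d) (ℱ : Finset (Set α)) : ℱ.card ≤ M.wt d ℱ := by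
  rw [Finset.card_eq_sum_ones]
  exact Finset.sum_le_sum fun F _ => Nat.one_le_pow _ _ hd

lemma wt_union_le (ℱ 𝒢 : Finset (Set α)) : M.wt d (ℱ ∪ 𝒢) ≤ M.wt d ℱ + M.wt d 𝒢 :=
  (Nat.le_add_right _ _).trans_eq Finset.sum_union_inter

lemma CoverOfGround.erase_union (hℱ : M.CoverOfGround ℱ) (hF : F ∈ ℱ)
    (h𝒢 : (M ↾ F).CoverOfGround 𝒢) : M.CoverOfGround (ℱ.erase F ∪ 𝒢) := by
  refine ⟨fun G hG => ?_, fun x hx => ?_⟩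
  · rcases Finset.mem_union.1 hG with hG | hG
    · exact hℱ.1 G (Finset.mem_of_mem_erase hG)
    · exact (h𝒢.1 G hG).trans (hℱ.1 F hF)
  obtain ⟨F', hF', hxF'⟩ := mem_sUnion.1 (hℱ.2 hx)
  by_cases hFF' : F' = F
  · subst hFF'
    obtain ⟨G, hG, hxG⟩ := mem_sUnion.1 (h𝒢.2 hxF')
    exact mem_sUnion.2 ⟨G, Finset.mem_union_right _ hG, hxG⟩
  · exact mem_sUnion.2 ⟨F', Finset.mem_union_left _ (Finset.mem_erase.2 ⟨hFF', hF'⟩), hxF'⟩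

lemma MinimalCoverOfGround.rk_le [M.Finite] (ha : 1 ≤ a) (hab : a < b) (hd : b.choose a ≤ d)
    (hU : ¬ M.HasUnifMinor (a + 1) b) (hℱ : M.MinimalCoverOfGround d ℱ) (hF : F ∈ ℱ) :
    M.rk F ≤ a := by
  by_contra! hFa
  have hFE : F ⊆ M.E := hℱ.1.1 F hF
  have : (M ↾ F).Finite := ⟨M.ground_finite.subset hFE⟩
  have hd1 : 1 ≤ d := (Nat.choose_pos hab.le).trans_le hd
  have hrank : (M ↾ F).rank = M.rk F := rk_restrict_of_subset subset_rfl
  obtain ⟨𝒢, h𝒢, hcard, hrk⟩ := exists_cover_rk_lt_rank ha hab (by omega)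
    fun h => hU (h.of_isMinor (restrict_isMinor hFE))
  have hwt𝒢 : M.wt d 𝒢 < d ^ M.rk F := calc
    M.wt d 𝒢 ≤ 𝒢.card * d ^ (M.rk F - 1) := wt_le_card_mul_pow hd1 fun G hG => by
        have := hrk G hG
        rw [hrank, rk_restrict_of_subset (R := F) (h𝒢.1 G hG)] at this
        omega
    _ ≤ (b - 1).choose a * d ^ (M.rk F - 1) := Nat.mul_le_mul_right _ hcard
    _ < d * d ^ (M.rk F - 1) := Nat.mul_lt_mul_of_pos_right
        ((Nat.choose_sub_one_lt_choose ha hab.le).trans_le hd) (by positivity)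
    _ = d ^ M.rk F := by rw [← pow_succ']; congr 1; omega
  have hmin := hℱ.2 _ (hℱ.1.erase_union hF h𝒢)
  have hsplit : M.wt d (ℱ.erase F) + d ^ M.rk F = M.wt d ℱ := Finset.sum_erase_add _ _ hF
  have := M.wt_union_le (d := d) (ℱ.erase F) 𝒢
  omega

lemma exists_minimalCoverOfGround (M : Matroid α) (d : ℕ) :
    ∃ ℱ, M.MinimalCoverOfGround d ℱ ∧ M.wt d ℱ = M.tauW d := by
  obtain ⟨ℱ, hℱ, hwt⟩ := Nat.sInf_mem (s := {n | ∃ ℱ, M.CoverOfGround ℱ ∧ M.wt d ℱ = n})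
    ⟨_, {M.E}, ⟨by simp, by simp⟩, rfl⟩
  exact ⟨ℱ, ⟨hℱ, fun ℱ' hℱ' => hwt ▸ Nat.sInf_le ⟨ℱ', hℱ', rfl⟩⟩, hwt⟩

lemma tauW_le_wt (hℱ : M.CoverOfGround ℱ) : M.tauW d ≤ M.wt d ℱ :=
  Nat.sInf_le ⟨ℱ, hℱ, rfl⟩

lemma tau_le_card (hℱ : M.CoverOfGround ℱ) (h : ∀ F ∈ ℱ, M.rk F ≤ a) : M.tau a ≤ ℱ.card :=
  Nat.sInf_le ⟨ℱ, rfl, fun F hF => ⟨hℱ.1 F hF, h F hF⟩, hℱ.2⟩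

lemma exists_card_eq_tau (hℱ : M.CoverOfGround ℱ) (h : ∀ F ∈ ℱ, M.rk F ≤ a) :
    ∃ 𝒞, M.CoverOfGround 𝒞 ∧ (∀ C ∈ 𝒞, M.rk C ≤ a) ∧ 𝒞.card = M.tau a := by
  obtain ⟨𝒞, hcard, h𝒞, hcov⟩ := Nat.sInf_mem (s := {n | ∃ 𝒞 : Finset (Set α), 𝒞.card = n ∧
      (∀ X ∈ 𝒞, X ⊆ M.E ∧ M.rk X ≤ a) ∧ M.E ⊆ ⋃₀ ↑𝒞})
    ⟨_, ℱ, rfl, fun F hF => ⟨hℱ.1 F hF, h F hF⟩, hℱ.2⟩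
  exact ⟨𝒞, ⟨fun C hC => (h𝒞 C hC).1, hcov⟩, fun C hC => (h𝒞 C hC).2, hcard⟩

end

/-- If `1 ≤ a < b`, `d ≥ C(b,a)` and `M` is a finite matroid with no
`U_{a+1,b}`-minor, then no `d`-minimal cover of `M` contains a set of rank greater than `a`,
and `τ_a(M) ≤ τ^d(M) ≤ d^a · τ_a(M)`. -/
theorem statement15 {α : Type*} (a b d : ℕ) (ha : 1 ≤ a) (hab : a < b)
    (hd : b.choose a ≤ d)
    (M : Matroid α) (hM : M.Finite) (hU : ¬ M.HasUnifMinor (a + 1) b) :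
    (∀ ℱ : Finset (Set α), M.MinimalCoverOfGround d ℱ → ∀ F ∈ ℱ, M.rk F ≤ a) ∧
      M.tau a ≤ M.tauW d ∧ M.tauW d ≤ d ^ a * M.tau a := by
  have hd1 : 1 ≤ d := (Nat.choose_pos hab.le).trans_le hd
  have hrk : ∀ ℱ : Finset (Set α), M.MinimalCoverOfGround d ℱ → ∀ F ∈ ℱ, M.rk F ≤ a :=
    fun _ hℱ _ hF => hℱ.rk_le ha hab hd hU hF
  obtain ⟨ℱ₀, hℱ₀, hwt₀⟩ := M.exists_minimalCoverOfGround d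
  obtain ⟨𝒞, h𝒞, h𝒞rk, h𝒞card⟩ := exists_card_eq_tau hℱ₀.1 (hrk ℱ₀ hℱ₀)
  refine ⟨hrk, ?_, ?_⟩
  · calc M.tau a ≤ ℱ₀.card := tau_le_card hℱ₀.1 (hrk ℱ₀ hℱ₀)
      _ ≤ M.wt d ℱ₀ := card_le_wt hd1 ℱ₀
      _ = M.tauW d := hwt₀
  · calc M.tauW d ≤ M.wt d 𝒞 := tauW_le_wt h𝒞
      _ ≤ 𝒞.card * d ^ a := wt_le_card_mul_pow hd1 h𝒞rk
      _ = d ^ a * M.tau a := by rw [h𝒞card, mul_comm]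

end Matroid
end
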